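/- For a dyadic interval I and 0 < α < 1, [M_{h_I}, I_α] h_I = c_α |I|^{-α} 1_I - |I|^{-1} I_α(1_I), where c_α = ∑_{n=1}^∞ 2^{-n(1-α)}. -/

import Mathlib

open MeasureTheory Set ENNReal

noncomputable section

/-- The dyadic interval `[j 2^k, (j+1) 2^k)`. -/
def dyadicI (k j : ℤ) : Set ℝ := Set.Ico ((j : ℝ) * 2 ^ k) (((j : ℝ) + 1) * 2 ^ k)

/-- The Haar function adapted to the dyadic interval `[j 2^k, (j+1) 2^k)`:
`h_I = |I|^{-1/2} (-1_{I_-} + 1_{I_+})`. -/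
def haarFn (k j : ℤ) : ℝ → ℝ := fun x =>
  ((2 : ℝ) ^ k) ^ (-(1 : ℝ) / 2) *
    (Set.indicator (dyadicI (k - 1) (2 * j + 1)) 1 x -
      Set.indicator (dyadicI (k - 1) (2 * j)) 1 x)

/-- The dyadic Riesz potential `I_α f = ∑_{K ∈ D} |K|^{-α} ⟨f, 1_K⟩ 1_K`. -/
def riesz (α : ℝ) (f : ℝ → ℝ) : ℝ → ℝ := fun x =>
  ∑' q : ℤ × ℤ, ((2 : ℝ) ^ q.1) ^ (-α) * (∫ y in dyadicI q.1 q.2, f y) *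
    Set.indicator (dyadicI q.1 q.2) 1 x

/-- The constant `c_α = ∑_{n=1}^∞ 2^{-n(1-α)}`. -/
def cst (α : ℝ) : ℝ := ∑' n : ℕ, (2 : ℝ) ^ (-((n : ℝ) + 1) * (1 - α))

/-! ### Auxiliary lemmas -/

lemma two_zpow_pos' (k : ℤ) : (0:ℝ) < 2 ^ k := zpow_pos (by norm_num) k

lemma mem_dyadicI_iff {k j : ℤ} {x : ℝ} : x ∈ dyadicI k j ↔ ⌊x / 2 ^ k⌋ = j := by
  have h := two_zpow_pos' k
  rw [dyadicI, Set.mem_Ico, Int.floor_eq_iff, le_div_iff₀ h, div_lt_iff₀ h]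

lemma dyadicI_nest {k m j i : ℤ} (hkm : k ≤ m) {x : ℝ} (hx : x ∈ dyadicI k j)
    (hxm : x ∈ dyadicI m i) : dyadicI k j ⊆ dyadicI m i := by
  obtain ⟨h1, h2⟩ := hx
  obtain ⟨h3, h4⟩ := hxm
  have hk := two_zpow_pos' k
  set N : ℤ := 2 ^ (m - k).toNat with hN
  have e : (2:ℝ) ^ m = (N : ℝ) * 2 ^ k := by
    rw [hN]
    push_cast
    rw [← zpow_natCast (2:ℝ), ← zpow_add₀ (two_ne_zero)]
    congr 1
    omega
  rw [e] at h3 h4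
  have hiN : i * N ≤ j := by
    have hr : ((i * N : ℤ) : ℝ) < ((j : ℤ) : ℝ) + 1 := by push_cast; nlinarith
    have : (i * N : ℤ) < j + 1 := by exact_mod_cast hr
    omega
  have hjN : j + 1 ≤ (i + 1) * N := by
    have hr : ((j : ℤ) : ℝ) < (((i + 1) * N : ℤ) : ℝ) := by push_cast; nlinarith
    have : (j : ℤ) < (i + 1) * N := by exact_mod_cast hr
    omega
  simp only [dyadicI]
  apply Set.Ico_subset_Ico
  · rw [e]
    have : ((i * N : ℤ) : ℝ) ≤ ((j : ℤ) : ℝ) := by exact_mod_cast hiN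
    push_cast at this ⊢
    nlinarith
  · rw [e]
    have : ((j + 1 : ℤ) : ℝ) ≤ (((i + 1) * N : ℤ) : ℝ) := by exact_mod_cast hjN
    push_cast at this ⊢
    nlinarith

lemma same_scale_disjoint {k j j' : ℤ} (h : j ≠ j') :
    Disjoint (dyadicI k j) (dyadicI k j') := by
  rw [Set.disjoint_left]
  intro x hx hx'
  rw [mem_dyadicI_iff] at hx hx'
  omega

lemma halves_union (k j : ℤ) :
    dyadicI (k-1) (2*j) ∪ dyadicI (k-1) (2*j+1) = dyadicI k j := by
  have h2 : (2:ℝ)^k = 2^(k-1) * 2 := by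
    rw [← zpow_add_one₀ (two_ne_zero : (2:ℝ) ≠ 0) (k-1)]
    congr 1
    omega
  have hp := two_zpow_pos' (k-1)
  ext x
  simp only [dyadicI, Set.mem_union, Set.mem_Ico]
  push_cast
  rw [h2]
  constructor
  · rintro (⟨a, b⟩ | ⟨a, b⟩) <;> exact ⟨by nlinarith, by nlinarith⟩
  · rintro ⟨a, b⟩
    rcases lt_or_ge x ((2*(j:ℝ)+1) * 2^(k-1)) with h | h
    · exact Or.inl ⟨by nlinarith, by nlinarith⟩
    · exact Or.inr ⟨by nlinarith, by nlinarith⟩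

lemma half_plus_subset (k j : ℤ) : dyadicI (k-1) (2*j+1) ⊆ dyadicI k j :=
  (halves_union k j) ▸ Set.subset_union_right

lemma half_minus_subset (k j : ℤ) : dyadicI (k-1) (2*j) ⊆ dyadicI k j :=
  (halves_union k j) ▸ Set.subset_union_left

lemma meas_dyadicI (k j : ℤ) : MeasurableSet (dyadicI k j) := measurableSet_Ico

lemma vol_dyadicI (k j : ℤ) : volume (dyadicI k j) = ENNReal.ofReal ((2:ℝ)^k) := by
  rw [dyadicI, Real.volume_Ico]
  congr 1
  ring

/-! ### Integrals of indicators over dyadic intervals -/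

lemma integral_ind (m i k' j' : ℤ) :
    ∫ y in dyadicI m i, (dyadicI k' j').indicator (1:ℝ→ℝ) y
      = (volume (dyadicI m i ∩ dyadicI k' j')).toReal := by
  rw [setIntegral_indicator (meas_dyadicI k' j')]
  simp [Measure.restrict_apply, Set.inter_comm]
  rfl

lemma integral_ind_subset {m i k' j' : ℤ} (h : dyadicI k' j' ⊆ dyadicI m i) :
    ∫ y in dyadicI m i, (dyadicI k' j').indicator (1:ℝ→ℝ) y = (2:ℝ)^k' := by
  rw [integral_ind, Set.inter_eq_self_of_subset_right h, vol_dyadicI,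
    ENNReal.toReal_ofReal (two_zpow_pos' k').le]

lemma integral_ind_disjoint {m i k' j' : ℤ} (h : Disjoint (dyadicI k' j') (dyadicI m i)) :
    ∫ y in dyadicI m i, (dyadicI k' j').indicator (1:ℝ→ℝ) y = 0 := by
  rw [integral_ind, Set.disjoint_iff_inter_eq_empty.mp h.symm]
  simp

lemma intg_ind (m i : ℤ) (S : Set ℝ) :
    Integrable ((dyadicI m i).indicator (1:ℝ→ℝ)) (volume.restrict S) := by
  apply Integrable.restrict
  rw [integrable_indicator_iff (meas_dyadicI m i)]
  exact integrableOn_const (by rw [vol_dyadicI]; exact ENNReal.ofReal_ne_top) (by simp)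

/-! ### Integrals of the Haar function -/

lemma csq (k : ℤ) :
    ((2:ℝ)^k) ^ (-(1:ℝ)/2) * ((2:ℝ)^k) ^ (-(1:ℝ)/2) = ((2:ℝ)^k)⁻¹ := by
  rw [← Real.rpow_add (two_zpow_pos' k),
    show (-(1:ℝ)/2 + -(1:ℝ)/2) = -1 by norm_num, Real.rpow_neg_one]

lemma integral_haar_plus {k j m i : ℤ} (hsub : dyadicI m i ⊆ dyadicI (k-1) (2*j+1)) :
    ∫ y in dyadicI m i, haarFn k j y = ((2:ℝ)^k) ^ (-(1:ℝ)/2) * 2^m := by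
  have hdis : Disjoint (dyadicI m i) (dyadicI (k-1) (2*j)) :=
    Disjoint.mono_left hsub (same_scale_disjoint (by omega))
  rw [setIntegral_congr_fun (meas_dyadicI m i)
      (g := fun _ => ((2:ℝ)^k) ^ (-(1:ℝ)/2))]
  · rw [setIntegral_const, measureReal_def, vol_dyadicI, ENNReal.toReal_ofReal (two_zpow_pos' m).le,
      smul_eq_mul]
    ring
  · intro y hy
    simp [haarFn, Set.indicator_of_mem (hsub hy),
      Set.indicator_of_notMem (Set.disjoint_left.mp hdis hy)]

lemma integral_haar_minus {k j m i : ℤ} (hsub : dyadicI m i ⊆ dyadicI (k-1) (2*j)) :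
    ∫ y in dyadicI m i, haarFn k j y = ((2:ℝ)^k) ^ (-(1:ℝ)/2) * (-1) * 2^m := by
  have hdis : Disjoint (dyadicI m i) (dyadicI (k-1) (2*j+1)) :=
    Disjoint.mono_left hsub (same_scale_disjoint (by omega))
  rw [setIntegral_congr_fun (meas_dyadicI m i)
      (g := fun _ => -(((2:ℝ)^k) ^ (-(1:ℝ)/2)))]
  · rw [setIntegral_const, measureReal_def, vol_dyadicI, ENNReal.toReal_ofReal (two_zpow_pos' m).le,
      smul_eq_mul]
    ring
  · intro y hy
    simp [haarFn, Set.indicator_of_mem (hsub hy),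
      Set.indicator_of_notMem (Set.disjoint_left.mp hdis hy)]

lemma integral_haar_superset {k j m i : ℤ} (hsub : dyadicI k j ⊆ dyadicI m i) :
    ∫ y in dyadicI m i, haarFn k j y = 0 := by
  have h1 : dyadicI (k-1) (2*j+1) ⊆ dyadicI m i := (half_plus_subset k j).trans hsub
  have h2 : dyadicI (k-1) (2*j) ⊆ dyadicI m i := (half_minus_subset k j).trans hsub
  simp only [haarFn]
  rw [integral_const_mul, integral_sub (intg_ind _ _ _) (intg_ind _ _ _),
    integral_ind_subset h1, integral_ind_subset h2]
  ring

lemma haar_sq (k j : ℤ) (y : ℝ) :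
    haarFn k j y * haarFn k j y = ((2:ℝ)^k)⁻¹ * (dyadicI k j).indicator 1 y := by
  simp only [haarFn]
  by_cases h1 : y ∈ dyadicI (k-1) (2*j+1)
  · have h2 : y ∉ dyadicI (k-1) (2*j) :=
      Set.disjoint_left.mp (same_scale_disjoint (by omega)) h1
    rw [Set.indicator_of_mem h1, Set.indicator_of_notMem h2,
      Set.indicator_of_mem (half_plus_subset k j h1)]
    simp only [Pi.one_apply]
    rw [← csq k]
    ring
  · by_cases h2 : y ∈ dyadicI (k-1) (2*j)
    · rw [Set.indicator_of_mem h2, Set.indicator_of_notMem h1,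
        Set.indicator_of_mem (half_minus_subset k j h2)]
      simp only [Pi.one_apply]
      rw [← csq k]
      ring
    · have hI : y ∉ dyadicI k j := by
        rw [← halves_union k j]
        simp [h1, h2]
      rw [Set.indicator_of_notMem h1, Set.indicator_of_notMem h2,
        Set.indicator_of_notMem hI]
      ring

/-! ### The Riesz potential applied to the Haar function -/

lemma riesz_sq (α : ℝ) (k j : ℤ) (x : ℝ) :
    riesz α (fun y => haarFn k j y * haarFn k j y) x
      = ((2:ℝ)^k)⁻¹ * riesz α ((dyadicI k j).indicator 1) x := by
  simp only [riesz]
  rw [← tsum_mul_left]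
  apply tsum_congr
  intro q
  have h : ∫ y in dyadicI q.1 q.2, haarFn k j y * haarFn k j y
      = ((2:ℝ)^k)⁻¹ * ∫ y in dyadicI q.1 q.2, (dyadicI k j).indicator 1 y := by
    simp only [haar_sq]
    exact integral_const_mul _ _
  rw [h]
  ring

lemma riesz_haar_eval (α : ℝ) (k j : ℤ) {x : ℝ} (hx : x ∈ dyadicI k j) (s : ℝ)
    (hint : ∀ m i : ℤ, m < k → x ∈ dyadicI m i →
      ∫ y in dyadicI m i, haarFn k j y = ((2:ℝ)^k) ^ (-(1:ℝ)/2) * s * 2^m) :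
    riesz α (haarFn k j) x
      = ((2:ℝ)^k) ^ (-(1:ℝ)/2) * s * ((2:ℝ)^k) ^ (1-α) * cst α := by
  simp only [riesz]
  set F : ℤ × ℤ → ℝ := fun q => ((2:ℝ)^q.1) ^ (-α) *
      (∫ y in dyadicI q.1 q.2, haarFn k j y) * (dyadicI q.1 q.2).indicator 1 x with hF
  set g : ℕ → ℤ × ℤ := fun n => (k - 1 - (n:ℤ), ⌊x / 2 ^ (k - 1 - (n:ℤ))⌋) with hg
  have hginj : Function.Injective g := by
    intro a b hab
    have h := congrArg Prod.fst hab
    simp only [hg] at h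
    omega
  have hsupp : Function.support F ⊆ Set.range g := by
    rintro ⟨m, i⟩ hq
    simp only [Function.mem_support, hF] at hq
    have hxK : x ∈ dyadicI m i := by
      by_contra h
      rw [Set.indicator_of_notMem h] at hq
      simp at hq
    have hlt : m < k := by
      by_contra h
      push_neg at h
      rw [integral_haar_superset (dyadicI_nest h hx hxK)] at hq
      simp at hq
    refine ⟨(k - 1 - m).toNat, ?_⟩
    have h1 : k - 1 - ((k-1-m).toNat : ℤ) = m := by omega
    simp only [hg, h1]
    exact congrArg (Prod.mk m) (mem_dyadicI_iff.mp hxK)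
  rw [← hginj.tsum_eq hsupp]
  have hFg : ∀ n : ℕ, F (g n) = ((2:ℝ)^k) ^ (-(1:ℝ)/2) * s * ((2:ℝ)^k) ^ (1-α) *
      (2:ℝ) ^ (-((n:ℝ)+1) * (1-α)) := by
    intro n
    have hm : (k - 1 - (n:ℤ)) < k := by omega
    have hxm : x ∈ dyadicI (k - 1 - (n:ℤ)) ⌊x / 2 ^ (k - 1 - (n:ℤ))⌋ :=
      mem_dyadicI_iff.mpr rfl
    simp only [hF, hg]
    rw [hint _ _ hm hxm, Set.indicator_of_mem hxm, Pi.one_apply]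
    have e1 : ((2:ℝ)^(k-1-(n:ℤ)))^(-α) * ((2:ℝ)^(k-1-(n:ℤ)))
        = ((2:ℝ)^(k-1-(n:ℤ)))^(1-α) := by
      nth_rewrite 2 [← Real.rpow_one ((2:ℝ)^(k-1-(n:ℤ)))]
      rw [← Real.rpow_add (two_zpow_pos' _)]
      congr 1
      ring
    have hb : (2:ℝ) ^ (k-1-(n:ℤ)) = (2:ℝ)^k * (2:ℝ) ^ (-1-(n:ℤ)) := by
      rw [← zpow_add₀ (two_ne_zero : (2:ℝ) ≠ 0)]
      congr 1
      omega
    have e2 : ((2:ℝ)^(k-1-(n:ℤ)))^(1-α)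
        = ((2:ℝ)^k)^(1-α) * (2:ℝ)^(-((n:ℝ)+1)*(1-α)) := by
      rw [hb, Real.mul_rpow (two_zpow_pos' k).le (two_zpow_pos' _).le]
      congr 1
      rw [← Real.rpow_intCast (2:ℝ) (-1-(n:ℤ)), ← Real.rpow_mul (by norm_num : (0:ℝ) ≤ 2)]
      congr 1
      push_cast
      ring
    calc ((2:ℝ)^(k-1-(n:ℤ)))^(-α) * (((2:ℝ)^k) ^ (-(1:ℝ)/2) * s * (2:ℝ)^(k-1-(n:ℤ))) * 1
        = ((2:ℝ)^k) ^ (-(1:ℝ)/2) * s *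
            (((2:ℝ)^(k-1-(n:ℤ)))^(-α) * ((2:ℝ)^(k-1-(n:ℤ)))) := by ring
      _ = ((2:ℝ)^k) ^ (-(1:ℝ)/2) * s * ((2:ℝ)^k) ^ (1-α) *
            (2:ℝ) ^ (-((n:ℝ)+1) * (1-α)) := by rw [e1, e2]; ring
  rw [tsum_congr hFg, tsum_mul_left, cst]

lemma haar_riesz (α : ℝ) (k j : ℤ) (x : ℝ) :
    haarFn k j x * riesz α (haarFn k j) x
      = cst α * ((2:ℝ)^k) ^ (-α) * (dyadicI k j).indicator 1 x := by
  by_cases hx : x ∈ dyadicI k j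
  · rw [Set.indicator_of_mem hx, Pi.one_apply]
    have key : ((2:ℝ)^k)⁻¹ * ((2:ℝ)^k)^(1-α) = ((2:ℝ)^k)^(-α) := by
      rw [← Real.rpow_neg_one ((2:ℝ)^k), ← Real.rpow_add (two_zpow_pos' k)]
      congr 1
      ring
    have hx' : x ∈ dyadicI (k-1) (2*j) ∪ dyadicI (k-1) (2*j+1) :=
      (halves_union k j).symm ▸ hx
    rcases hx' with hminus | hplus
    · have h1 : x ∉ dyadicI (k-1) (2*j+1) :=
        Set.disjoint_left.mp (same_scale_disjoint (by omega)) hminus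
      rw [riesz_haar_eval α k j hx (-1) (fun m i hm hxm =>
        by rw [integral_haar_minus (dyadicI_nest (by omega) hxm hminus)])]
      simp only [haarFn, Set.indicator_of_mem hminus, Set.indicator_of_notMem h1,
        Pi.one_apply]
      calc ((2:ℝ)^k) ^ (-(1:ℝ)/2) * (0 - 1) *
            (((2:ℝ)^k) ^ (-(1:ℝ)/2) * (-1) * ((2:ℝ)^k) ^ (1-α) * cst α)
          = (((2:ℝ)^k) ^ (-(1:ℝ)/2) * ((2:ℝ)^k) ^ (-(1:ℝ)/2)) *
              (((2:ℝ)^k) ^ (1-α) * cst α) := by ring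
        _ = cst α * ((2:ℝ)^k) ^ (-α) * 1 := by
            rw [csq k, ← mul_assoc, key]; ring
    · have h2 : x ∉ dyadicI (k-1) (2*j) :=
        Set.disjoint_left.mp (same_scale_disjoint (by omega)) hplus
      rw [riesz_haar_eval α k j hx 1 (fun m i hm hxm =>
        by rw [integral_haar_plus (dyadicI_nest (by omega) hxm hplus)]; ring)]
      simp only [haarFn, Set.indicator_of_mem hplus, Set.indicator_of_notMem h2,
        Pi.one_apply]
      calc ((2:ℝ)^k) ^ (-(1:ℝ)/2) * (1 - 0) *
            (((2:ℝ)^k) ^ (-(1:ℝ)/2) * 1 * ((2:ℝ)^k) ^ (1-α) * cst α)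
          = (((2:ℝ)^k) ^ (-(1:ℝ)/2) * ((2:ℝ)^k) ^ (-(1:ℝ)/2)) *
              (((2:ℝ)^k) ^ (1-α) * cst α) := by ring
        _ = cst α * ((2:ℝ)^k) ^ (-α) * 1 := by
            rw [csq k, ← mul_assoc, key]; ring
  · have h1 : x ∉ dyadicI (k-1) (2*j+1) := fun h => hx (half_plus_subset k j h)
    have h2 : x ∉ dyadicI (k-1) (2*j) := fun h => hx (half_minus_subset k j h)
    rw [Set.indicator_of_notMem hx]
    simp [haarFn, Set.indicator_of_notMem h1, Set.indicator_of_notMem h2]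

/-- [M_(h_I), I_α] h_I = c_α |I|^(-α) 1_I - |I|⁻¹ I_α(1_I). -/
theorem stmt7 (α : ℝ) (hα0 : 0 < α) (hα1 : α < 1) (k j : ℤ) (x : ℝ) :
    haarFn k j x * riesz α (haarFn k j) x -
        riesz α (fun y => haarFn k j y * haarFn k j y) x =
      cst α * ((2 : ℝ) ^ k) ^ (-α) * Set.indicator (dyadicI k j) 1 x -
        ((2 : ℝ) ^ k)⁻¹ * riesz α (Set.indicator (dyadicI k j) 1) x := by
  rw [riesz_sq α k j x, haar_riesz α k j x]
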